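/- Weak duality for the relaxed (penalized) capacity-constrained transport problem: let ε > 0, let h be measurable with 0 ≤ h ≤ h̄, and let (u, v, w) satisfy u + v − w + c ≥ 0, w ≤ 0, with u ∈ L²(ℝ^m), v ∈ L²(ℝ^n), w ∈ L¹(h̄ dx dy). Then Iᶜ_ε(h) := ∬ c h + (1/(2ε))‖⟨h⟩_x − f‖²_{L²} + (1/(2ε))‖⟨h⟩_y − g‖²_{L²} ≥ −∫uf − ∫vg + ∬ w h̄ − (ε/2)‖u‖²_{L²} − (ε/2)‖v‖²_{L²}, whenever both sides are finite. -/

import Mathlib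

/-! Integrating the pointwise inequalities `w h̄ ≤ w h ≤ (c + u + v) h`, which hold because
`w ≤ 0`, `h ≤ h̄`, `h ≥ 0` and `u + v − w + c ≥ 0`, gives `∬ w h̄ ≤ ∬ c h + ∬ u h + ∬ v h`.
By Fubini `∬ u h = ∫ u ⟨h⟩ₓ = ∫ u f + ∫ u (⟨h⟩ₓ − f)`, and Young's inequality
`u (⟨h⟩ₓ − f) ≤ (ε/2) u² + (1/(2ε)) (⟨h⟩ₓ − f)²` turns this into the claim; likewise for `v`.
The integrability of `u(x) h(x,y)` comes from `h ≤ h̄`: the support of `h̄` lies in a product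
`K₁ × K₂` of compact sets, and `u ∈ L²` is integrable on `K₁`. -/

open MeasureTheory

lemma mul_le_half_mul_sq_add_sq_div {ε : ℝ} (hε : 0 < ε) (a b : ℝ) :
    a * b ≤ ε / 2 * a ^ 2 + 1 / (2 * ε) * b ^ 2 := by
  have key : 0 ≤ (ε * a - b) ^ 2 / (2 * ε) := by positivity
  have expand : (ε * a - b) ^ 2 / (2 * ε) = ε / 2 * a ^ 2 + 1 / (2 * ε) * b ^ 2 - a * b := by
    field_simp; ring
  linarith

namespace MeasureTheory

section

variable {X Y : Type*} [MeasurableSpace X] [MeasurableSpace Y] {μ : Measure X} {ν : Measure Y}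

lemma integral_mul_le_of_memLp {ε : ℝ} (hε : 0 < ε) {u a f : X → ℝ} (hu : MemLp u 2 μ)
    (had : MemLp (fun x => a x - f x) 2 μ) (huf : Integrable (fun x => u x * f x) μ) :
    ∫ x, u x * a x ∂μ ≤ ∫ x, u x * f x ∂μ + ε / 2 * ∫ x, u x ^ 2 ∂μ
      + 1 / (2 * ε) * ∫ x, (a x - f x) ^ 2 ∂μ := by
  have hud : Integrable (fun x => u x * (a x - f x)) μ := hu.integrable_mul had
  have hu2 := hu.integrable_sq.const_mul (ε / 2)
  have had2 := had.integrable_sq.const_mul (1 / (2 * ε))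
  calc ∫ x, u x * a x ∂μ = ∫ x, u x * f x + u x * (a x - f x) ∂μ := by congr! 2; ring
    _ = ∫ x, u x * f x ∂μ + ∫ x, u x * (a x - f x) ∂μ := integral_add huf hud
    _ ≤ ∫ x, u x * f x ∂μ + ∫ x, ε / 2 * u x ^ 2 + 1 / (2 * ε) * (a x - f x) ^ 2 ∂μ := by
        refine (add_le_add_iff_left _).2 (integral_mono hud (hu2.add had2) fun x => ?_)
        exact mul_le_half_mul_sq_add_sq_div hε _ _
    _ = _ := by rw [integral_add hu2 had2, integral_const_mul, integral_const_mul, add_assoc]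

lemma integral_comp_fst_mul_eq [SFinite μ] [SFinite ν] {u : X → ℝ} {h : X × Y → ℝ}
    (huh : Integrable (fun p => u p.1 * h p) (μ.prod ν)) :
    ∫ p, u p.1 * h p ∂μ.prod ν = ∫ x, u x * ∫ y, h (x, y) ∂ν ∂μ := by
  simp_rw [integral_prod _ huh, integral_const_mul]

lemma integral_comp_snd_mul_eq [SFinite μ] [SFinite ν] {v : Y → ℝ} {h : X × Y → ℝ}
    (hvh : Integrable (fun p => v p.2 * h p) (μ.prod ν)) :
    ∫ p, v p.2 * h p ∂μ.prod ν = ∫ y, v y * ∫ x, h (x, y) ∂μ ∂ν := by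
  simp_rw [integral_prod_symm _ hvh, integral_const_mul]

variable [TopologicalSpace X] [TopologicalSpace Y] [LocallyCompactSpace X] [LocallyCompactSpace Y]

lemma LocallyIntegrable.comp_fst [SFinite μ] [SFinite ν] [IsFiniteMeasureOnCompacts ν]
    {u : X → ℝ} (hu : LocallyIntegrable u μ) : LocallyIntegrable (fun p => u p.1) (μ.prod ν) := by
  refine locallyIntegrable_iff.2 fun K hK => ?_
  have hK₁ := hK.image continuous_fst
  have hK₂ := hK.image continuous_snd
  have : IsFiniteMeasure (ν.restrict (Prod.snd '' K)) :=
    isFiniteMeasure_restrict.2 hK₂.measure_lt_top.ne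
  refine IntegrableOn.mono_set ?_ Set.subset_fst_image_prod_snd_image
  rw [IntegrableOn, ← Measure.prod_restrict]
  exact (hu.integrableOn_isCompact hK₁).comp_fst _

lemma LocallyIntegrable.comp_snd [SFinite μ] [SFinite ν] [IsFiniteMeasureOnCompacts μ]
    {v : Y → ℝ} (hv : LocallyIntegrable v ν) : LocallyIntegrable (fun p => v p.2) (μ.prod ν) := by
  refine locallyIntegrable_iff.2 fun K hK => ?_
  have hK₁ := hK.image continuous_fst
  have hK₂ := hK.image continuous_snd
  have : IsFiniteMeasure (μ.restrict (Prod.fst '' K)) :=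
    isFiniteMeasure_restrict.2 hK₁.measure_lt_top.ne
  refine IntegrableOn.mono_set ?_ Set.subset_fst_image_prod_snd_image
  rw [IntegrableOn, ← Measure.prod_restrict]
  exact (hv.integrableOn_isCompact hK₂).comp_snd _

end

lemma LocallyIntegrable.integrable_mul_of_ae_le_hasCompactSupport {Z : Type*}
    [MeasurableSpace Z] [TopologicalSpace Z] [OpensMeasurableSpace Z] {μ : Measure Z}
    {F h b : Z → ℝ} (hF : LocallyIntegrable F μ) (hb_bdd : ∃ C, ∀ z, b z ≤ C)
    (hb : HasCompactSupport b) (hh_meas : AEStronglyMeasurable h μ)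
    (hh : ∀ᵐ z ∂μ, 0 ≤ h z ∧ h z ≤ b z) : Integrable (fun z => F z * h z) μ := by
  obtain ⟨C, hC⟩ := hb_bdd
  have hFK : Integrable ((tsupport b).indicator F) μ :=
    (hF.integrableOn_isCompact hb).integrable_indicator (isClosed_tsupport b).measurableSet
  refine (hFK.mul_bdd hh_meas (c := C) ?_).congr ?_
  · filter_upwards [hh] with z hz
    rw [Real.norm_eq_abs, abs_of_nonneg hz.1]
    exact hz.2.trans (hC z)
  · filter_upwards [hh] with z hz
    by_cases hzK : z ∈ tsupport b
    · rw [Set.indicator_of_mem hzK]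
    · have hz0 : h z = 0 :=
        le_antisymm (hz.2.trans_eq (image_eq_zero_of_notMem_tsupport hzK)) hz.1
      rw [hz0, mul_zero, mul_zero]

lemma Integrable.mul_of_ae_le {Z : Type*} [MeasurableSpace Z] {μ : Measure Z} {w h b : Z → ℝ}
    (hwb : Integrable (fun z => w z * b z) μ) (hwh : AEStronglyMeasurable (fun z => w z * h z) μ)
    (hh : ∀ᵐ z ∂μ, 0 ≤ h z ∧ h z ≤ b z) : Integrable (fun z => w z * h z) μ := by
  refine hwb.mono hwh ?_
  filter_upwards [hh] with z hz
  simp only [norm_mul, Real.norm_eq_abs, abs_of_nonneg hz.1]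
  exact mul_le_mul_of_nonneg_left (hz.2.trans (le_abs_self _)) (abs_nonneg _)

end MeasureTheory

theorem relaxed_weak_duality (m n : ℕ) (ε : ℝ) (hε : 0 < ε)
    (hbar c : (Fin m → ℝ) × (Fin n → ℝ) → ℝ)
    (f : (Fin m → ℝ) → ℝ) (g : (Fin n → ℝ) → ℝ)
    (hbar_bdd : ∃ C, ∀ p, hbar p ≤ C) (hbar_supp : HasCompactSupport hbar)
    (f_int : Integrable f)
    (g_int : Integrable g)
    (h : (Fin m → ℝ) × (Fin n → ℝ) → ℝ) (h_meas : Measurable h)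
    (h_bds : ∀ᵐ p, 0 ≤ h p ∧ h p ≤ hbar p)
    (u : (Fin m → ℝ) → ℝ) (v : (Fin n → ℝ) → ℝ)
    (w : (Fin m → ℝ) × (Fin n → ℝ) → ℝ)
    (u_meas : Measurable u) (v_meas : Measurable v) (w_meas : Measurable w)
    (u_sq_int : Integrable (fun x => (u x) ^ 2))
    (v_sq_int : Integrable (fun y => (v y) ^ 2))
    (uf_int : Integrable (fun x => u x * f x))
    (vg_int : Integrable (fun y => v y * g y))
    (whbar_int : Integrable (fun p => w p * hbar p))
    (feas : ∀ᵐ p : (Fin m → ℝ) × (Fin n → ℝ), 0 ≤ u p.1 + v p.2 - w p + c p)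
    (w_nonpos : ∀ᵐ p : (Fin m → ℝ) × (Fin n → ℝ), w p ≤ 0)
    (ch_int : Integrable (fun p => c p * h p))
    (margx_sq_int : Integrable (fun x => ((∫ y, h (x, y)) - f x) ^ 2))
    (margy_sq_int : Integrable (fun y => ((∫ x, h (x, y)) - g y) ^ 2)) :
    -(∫ x, u x * f x) - (∫ y, v y * g y) + (∫ p, w p * hbar p)
        - (ε / 2) * (∫ x, (u x) ^ 2) - (ε / 2) * (∫ y, (v y) ^ 2) ≤
      (∫ p, c p * h p) + (1 / (2 * ε)) * (∫ x, ((∫ y, h (x, y)) - f x) ^ 2)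
        + (1 / (2 * ε)) * (∫ y, ((∫ x, h (x, y)) - g y) ^ 2) := by
  have hu : MemLp u 2 := (memLp_two_iff_integrable_sq u_meas.aestronglyMeasurable).2 u_sq_int
  have hv : MemLp v 2 := (memLp_two_iff_integrable_sq v_meas.aestronglyMeasurable).2 v_sq_int
  have hdx : MemLp (fun x => (∫ y, h (x, y)) - f x) 2 :=
    (memLp_two_iff_integrable_sq ((h_meas.stronglyMeasurable.integral_prod_right'
      (ν := volume)).aestronglyMeasurable.sub f_int.1)).2 margx_sq_int
  have hdy : MemLp (fun y => (∫ x, h (x, y)) - g y) 2 :=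
    (memLp_two_iff_integrable_sq ((h_meas.stronglyMeasurable.integral_prod_left'
      (μ := volume)).aestronglyMeasurable.sub g_int.1)).2 margy_sq_int
  have uh_int : Integrable (fun p => u p.1 * h p) :=
    (hu.locallyIntegrable one_le_two).comp_fst.integrable_mul_of_ae_le_hasCompactSupport
      hbar_bdd hbar_supp h_meas.aestronglyMeasurable h_bds
  have vh_int : Integrable (fun p => v p.2 * h p) :=
    (hv.locallyIntegrable one_le_two).comp_snd.integrable_mul_of_ae_le_hasCompactSupport
      hbar_bdd hbar_supp h_meas.aestronglyMeasurable h_bds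
  have wh_int : Integrable (fun p => w p * h p) :=
    whbar_int.mul_of_ae_le (w_meas.mul h_meas).aestronglyMeasurable h_bds
  have slack : ∫ p, w p * hbar p ≤ ∫ p, w p * h p := by
    refine integral_mono_ae whbar_int wh_int ?_
    filter_upwards [h_bds, w_nonpos] with p hp hw
    exact mul_le_mul_of_nonpos_left hp.2 hw
  have chu_int : Integrable (fun p => c p * h p + u p.1 * h p) := ch_int.add uh_int
  have dual_feas : ∫ p, w p * h p ≤ ∫ p, (c p * h p + u p.1 * h p) + v p.2 * h p := by
    refine integral_mono_ae wh_int (chu_int.add vh_int) ?_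
    filter_upwards [h_bds, feas] with p hp hf
    linarith [mul_nonneg hf hp.1]
  have fubini_x : ∫ p, u p.1 * h p = ∫ x, u x * ∫ y, h (x, y) := integral_comp_fst_mul_eq uh_int
  have fubini_y : ∫ p, v p.2 * h p = ∫ y, v y * ∫ x, h (x, y) := integral_comp_snd_mul_eq vh_int
  rw [integral_add chu_int vh_int, integral_add ch_int uh_int, fubini_x, fubini_y] at dual_feas
  have young_x := integral_mul_le_of_memLp hε hu hdx uf_int
  have young_y := integral_mul_le_of_memLp hε hv hdy vg_int
  linarith
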